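/- arXiv:math/0701167 — 5 statements merged into one kernel-verified Lean document; each statement's English description precedes it below -/
import Mathlib

section
/- If Σ_{n≥1} n^{-3/2} ‖V_n g‖ < ∞ and ‖V_n g‖ = O(n^α) for some α > 0, then ‖h_ε‖ = O(ε^{-α}) as ε → 0. -/
/-!
Write `x = (1 + ε)⁻¹` and `Sₙ = V_n g`. Abel summation turns `h_ε = ∑ xⁿ⁺¹ Qⁿ g` into
`(1 - x) ∑ xⁿ Sₙ`, so `‖h_ε‖ ≤ C (1 - x) ∑ n^α xⁿ`. Since `x ≤ ((1 + x)/2) e^{-(1-x)/2}`,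
bounding `n^α e^{-(1-x)n/2}` by `(2α/(1-x))^α` and summing the geometric series with ratio
`(1 + x)/2` gives `‖h_ε‖ ≤ 2C (2α/(1-x))^α`; finally `1 - x ≥ ε/2` for `ε < 1`.
-/

open MeasureTheory Finset

theorem hasSum_pow_succ_smul_of_hasSum_pow_smul_sum_range {R E : Type*} [Ring R]
    [AddCommGroup E] [Module R E] [TopologicalSpace E] [IsTopologicalAddGroup E]
    [ContinuousConstSMul R E] {x : R} {a : ℕ → E} {T : E}
    (hT : HasSum (fun n => x ^ n • ∑ k ∈ range n, a k) T) :
    HasSum (fun n => x ^ (n + 1) • a n) ((1 - x) • T) := by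
  have hshift : HasSum (fun n => x ^ (n + 1) • ∑ k ∈ range (n + 1), a k) T := by
    simpa using (hasSum_nat_add_iff' 1).2 hT
  have hmul : HasSum (fun n => x ^ (n + 1) • ∑ k ∈ range n, a k) (x • T) := by
    simpa only [pow_succ', mul_smul] using hT.const_smul x
  convert hshift.sub hmul using 1
  · ext n
    rw [← smul_sub, sum_range_succ_sub_sum]
  · rw [sub_smul, one_smul]

namespace Real

theorem rpow_mul_exp_neg_mul_le {α l y : ℝ} (hα : 0 < α) (hl : 0 < l) (hy : 0 ≤ y) :
    y ^ α * exp (-(l * y)) ≤ (α / l) ^ α := by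
  have hpow : y ^ α ≤ (α / l) ^ α * exp (l * y) :=
    calc y ^ α = ((α / l) * (l * y / α)) ^ α := by field_simp
      _ = (α / l) ^ α * (l * y / α) ^ α := mul_rpow (by positivity) (by positivity)
      _ ≤ (α / l) ^ α * exp (l * y / α) ^ α := by
          gcongr
          linarith [add_one_le_exp (l * y / α)]
      _ = (α / l) ^ α * exp (l * y) := by rw [← exp_mul, div_mul_cancel₀ _ hα.ne']
  calc y ^ α * exp (-(l * y)) ≤ (α / l) ^ α * exp (l * y) * exp (-(l * y)) := by gcongr
    _ = (α / l) ^ α := by rw [mul_assoc, ← exp_add, add_neg_cancel, exp_zero, mul_one]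

end Real

section RpowMulPow

variable {α x : ℝ}

theorem rpow_mul_pow_le (hα : 0 < α) (hx0 : 0 ≤ x) (hx1 : x < 1) (n : ℕ) :
    (n : ℝ) ^ α * x ^ n ≤ (2 * α / (1 - x)) ^ α * ((1 + x) / 2) ^ n := by
  set t := 1 - x
  have ht0 : 0 < t := by linarith
  -- `x = 1 - t ≤ (1 - t/2)² ≤ (1 - t/2) e^{-t/2}`
  have hx : x ≤ (1 + x) / 2 * Real.exp (-(t / 2)) := by
    nlinarith [Real.one_sub_le_exp_neg (t / 2)]
  have hpeak : (n : ℝ) ^ α * Real.exp (-(t / 2)) ^ n ≤ (2 * α / t) ^ α := by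
    rw [← Real.exp_nat_mul, show 2 * α / t = α / (t / 2) by field_simp]
    convert Real.rpow_mul_exp_neg_mul_le hα (half_pos ht0) n.cast_nonneg using 3
    ring
  calc (n : ℝ) ^ α * x ^ n ≤ (n : ℝ) ^ α * ((1 + x) / 2 * Real.exp (-(t / 2))) ^ n := by
        gcongr
    _ = ((n : ℝ) ^ α * Real.exp (-(t / 2)) ^ n) * ((1 + x) / 2) ^ n := by rw [mul_pow]; ring
    _ ≤ (2 * α / t) ^ α * ((1 + x) / 2) ^ n := by gcongr

theorem summable_rpow_mul_pow (hα : 0 < α) (hx0 : 0 ≤ x) (hx1 : x < 1) :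
    Summable fun n : ℕ => (n : ℝ) ^ α * x ^ n :=
  Summable.of_nonneg_of_le (fun n => by positivity) (rpow_mul_pow_le hα hx0 hx1)
    ((summable_geometric_of_lt_one (by positivity) (by linarith)).mul_left _)

theorem tsum_rpow_mul_pow_le (hα : 0 < α) (hx0 : 0 ≤ x) (hx1 : x < 1) :
    ∑' n : ℕ, (n : ℝ) ^ α * x ^ n ≤ (2 * α / (1 - x)) ^ α * (2 / (1 - x)) :=
  calc ∑' n : ℕ, (n : ℝ) ^ α * x ^ n
        ≤ ∑' n : ℕ, (2 * α / (1 - x)) ^ α * ((1 + x) / 2) ^ n :=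
      (summable_rpow_mul_pow hα hx0 hx1).tsum_le_tsum (rpow_mul_pow_le hα hx0 hx1)
        ((summable_geometric_of_lt_one (by positivity) (by linarith)).mul_left _)
    _ = (2 * α / (1 - x)) ^ α * (2 / (1 - x)) := by
      rw [tsum_mul_left, tsum_geometric_of_lt_one (by positivity) (by linarith)]
      congr 1
      field_simp
      ring

end RpowMulPow

theorem norm_le_of_hasSum_pow_succ_smul {E : Type*} [NormedAddCommGroup E] [NormedSpace ℝ E]
    [CompleteSpace E] {a : ℕ → E} {s : E} {C α x : ℝ} (hα : 0 < α) (hx0 : 0 ≤ x) (hx1 : x < 1)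
    (hS : ∀ n : ℕ, ‖∑ k ∈ range n, a k‖ ≤ C * (n : ℝ) ^ α)
    (hs : HasSum (fun n => x ^ (n + 1) • a n) s) :
    ‖s‖ ≤ 2 * C * (2 * α / (1 - x)) ^ α := by
  have hC : 0 ≤ C := by simpa using (norm_nonneg _).trans (hS 1)
  have ht : 0 < 1 - x := by linarith
  have hterm : ∀ n : ℕ, ‖x ^ n • ∑ k ∈ range n, a k‖ ≤ C * ((n : ℝ) ^ α * x ^ n) := by
    intro n
    calc ‖x ^ n • ∑ k ∈ range n, a k‖ = x ^ n * ‖∑ k ∈ range n, a k‖ := by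
          rw [norm_smul, norm_pow, Real.norm_of_nonneg hx0]
      _ ≤ x ^ n * (C * (n : ℝ) ^ α) := by gcongr; exact hS n
      _ = C * ((n : ℝ) ^ α * x ^ n) := by ring
  have hsummable : Summable fun n : ℕ => C * ((n : ℝ) ^ α * x ^ n) :=
    (summable_rpow_mul_pow hα hx0 hx1).mul_left C
  obtain ⟨T, hT⟩ := hsummable.of_norm_bounded hterm
  rw [← (hasSum_pow_succ_smul_of_hasSum_pow_smul_sum_range hT).unique hs, norm_smul,
    Real.norm_of_nonneg ht.le]
  have hTle : ‖T‖ ≤ C * ∑' n : ℕ, (n : ℝ) ^ α * x ^ n := by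
    rw [← tsum_mul_left]
    exact hT.norm_le_of_bounded hsummable.hasSum hterm
  calc (1 - x) * ‖T‖ ≤ (1 - x) * (C * ((2 * α / (1 - x)) ^ α * (2 / (1 - x)))) := by
        grw [hTle, tsum_rpow_mul_pow_le hα hx0 hx1]
    _ = 2 * C * (2 * α / (1 - x)) ^ α := by
        field_simp

theorem stmt2_general {X : Type*} [MeasurableSpace X] (π : Measure X)
    (Q : Lp ℝ 2 π →L[ℝ] Lp ℝ 2 π)
    (g : Lp ℝ 2 π)
    (α : ℝ) (hα : 0 < α)
    (hV : ∃ C : ℝ, ∀ n : ℕ, 1 ≤ n → ‖∑ k ∈ Finset.range n, (Q ^ k) g‖ ≤ C * (n : ℝ) ^ α)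
    (h : ℝ → Lp ℝ 2 π)
    (hres : ∀ ε : ℝ, 0 < ε →
      HasSum (fun n : ℕ => ((1 + ε) ^ (n + 1))⁻¹ • (Q ^ n) g) (h ε)) :
    ∃ C ε₀ : ℝ, 0 < C ∧ 0 < ε₀ ∧
      ∀ ε : ℝ, 0 < ε → ε < ε₀ → ‖h ε‖ ≤ C * ε ^ (-α) := by
  obtain ⟨C, hC⟩ := hV
  have hS : ∀ n : ℕ, ‖∑ k ∈ range n, (Q ^ k) g‖ ≤ max C 1 * (n : ℝ) ^ α := by
    rintro (_ | n)
    · simp [Real.zero_rpow hα.ne']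
    · exact (hC _ n.succ_pos).trans (by gcongr; exact le_max_left _ _)
  refine ⟨2 * max C 1 * (4 * α) ^ α, 1, by positivity, one_pos, fun ε hε hε1 => ?_⟩
  have hx1 : (1 + ε)⁻¹ < 1 := inv_lt_one_of_one_lt₀ (by linarith)
  have hbound := norm_le_of_hasSum_pow_succ_smul hα (by positivity) hx1 hS
    (by simpa only [inv_pow] using hres ε hε)
  have hgap : 2 * α / (1 - (1 + ε)⁻¹) ≤ 4 * α / ε := by
    have hone_sub : 1 - (1 + ε)⁻¹ = ε / (1 + ε) := by field_simp; ring
    rw [hone_sub, div_div_eq_mul_div, div_le_div_iff₀ hε hε]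
    nlinarith [mul_pos (mul_pos hα hε) (by linarith : (0 : ℝ) < 1 - ε)]
  calc ‖h ε‖ ≤ 2 * max C 1 * (2 * α / (1 - (1 + ε)⁻¹)) ^ α := hbound
    _ ≤ 2 * max C 1 * (4 * α / ε) ^ α := by gcongr
    _ = 2 * max C 1 * (4 * α) ^ α * ε ^ (-α) := by
        rw [Real.div_rpow (by positivity) hε.le, Real.rpow_neg hε.le]
        ring

/-- If `∑_{n≥1} n^{-3/2} ‖V_n g‖ < ∞` and `‖V_n g‖ = O(n^α)` for some `α > 0`, then
`‖h_ε‖ = O(ε^{-α})` as `ε → 0`, where `h_ε = ∑_{n≥1} Q^{n-1} g/(1+ε)^n`. -/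
theorem stmt2 {X : Type*} [MeasurableSpace X] (π : Measure X) [IsProbabilityMeasure π]
    (Q : Lp ℝ 2 π →L[ℝ] Lp ℝ 2 π) (hQ : ‖Q‖ ≤ 1)
    (g : Lp ℝ 2 π) (hg0 : ∫ x, g x ∂π = 0)
    (hsum : Summable fun n : ℕ =>
      (n : ℝ) ^ (-(3 : ℝ) / 2) * ‖∑ k ∈ Finset.range n, (Q ^ k) g‖)
    (α : ℝ) (hα : 0 < α)
    (hV : ∃ C : ℝ, ∀ n : ℕ, 1 ≤ n → ‖∑ k ∈ Finset.range n, (Q ^ k) g‖ ≤ C * (n : ℝ) ^ α)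
    (h : ℝ → Lp ℝ 2 π)
    (hres : ∀ ε : ℝ, 0 < ε →
      HasSum (fun n : ℕ => ((1 + ε) ^ (n + 1))⁻¹ • (Q ^ n) g) (h ε)) :
    ∃ C ε₀ : ℝ, 0 < C ∧ 0 < ε₀ ∧
      ∀ ε : ℝ, 0 < ε → ε < ε₀ → ‖h ε‖ ≤ C * ε ^ (-α) :=
  stmt2_general π Q g α hα hV h hres
end

section
/- For all 0 < ε, δ < ∞, ‖H_ε − H_δ‖₁² ≤ (ε + δ)(‖h_ε‖² + ‖h_δ‖²). -/
/-!
Put `u = h_ε - h_δ`, so that `H_ε - H_δ = u(x₁) - Qu(x₀)`. Subtracting the two resolvent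
equations, `g` cancels and `Qu = (1 + ε) h_ε - (1 + δ) h_δ`. As `π` is `Q`-invariant, both
marginals of `π₁` are `π` and `Qu(x₀)` is the conditional mean of `u(x₁)` given `x₀`, so
Pythagoras gives `‖H_ε - H_δ‖₁² = ‖u‖² - ‖Qu‖²`. The claim follows by integrating the pointwise
inequality `(x - y)² - ((1 + ε) x - (1 + δ) y)² ≤ (ε + δ) (x² + y²)`.
-/

open MeasureTheory ProbabilityTheory

lemma sq_sub_sub_sq_le {ε δ : ℝ} (hε : 0 ≤ ε) (hδ : 0 ≤ δ) (x y : ℝ) :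
    (x - y) ^ 2 - ((1 + ε) * x - (1 + δ) * y) ^ 2 ≤ (ε + δ) * (x ^ 2 + y ^ 2) := by
  nlinarith [mul_nonneg (add_nonneg hε hδ) (sq_nonneg (x - y)), mul_nonneg hε (sq_nonneg x),
    mul_nonneg hδ (sq_nonneg y), sq_nonneg (ε * x - δ * y)]

lemma integral_sq_sub_sub_integral_sq_le {α : Type*} [MeasurableSpace α] {μ : Measure α}
    {ε δ : ℝ} (hε : 0 ≤ ε) (hδ : 0 ≤ δ) {f h : α → ℝ} (hf : MemLp f 2 μ) (hh : MemLp h 2 μ) :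
    ∫ x, (f x - h x) ^ 2 ∂μ - ∫ x, ((1 + ε) * f x - (1 + δ) * h x) ^ 2 ∂μ
      ≤ (ε + δ) * (∫ x, f x ^ 2 ∂μ + ∫ x, h x ^ 2 ∂μ) := by
  have hsub : MemLp (fun x ↦ f x - h x) 2 μ := hf.sub hh
  have hcomb : MemLp (fun x ↦ (1 + ε) * f x - (1 + δ) * h x) 2 μ :=
    (hf.const_mul _).sub (hh.const_mul _)
  rw [← integral_sub hsub.integrable_sq hcomb.integrable_sq,
    ← integral_add hf.integrable_sq hh.integrable_sq, ← integral_const_mul]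
  exact integral_mono (hsub.integrable_sq.sub hcomb.integrable_sq)
    ((hf.integrable_sq.add hh.integrable_sq).const_mul _)
    fun x ↦ sq_sub_sub_sq_le hε hδ (f x) (h x)

lemma MeasureTheory.MeasurePreserving.integral_comp_of_aestronglyMeasurable
    {α β E : Type*} [MeasurableSpace α] [MeasurableSpace β] [NormedAddCommGroup E]
    [NormedSpace ℝ E] {μ : Measure α} {ν : Measure β} {f : α → β} (hf : MeasurePreserving f μ ν)
    {g : β → E} (hg : AEStronglyMeasurable g ν) :
    ∫ x, g (f x) ∂μ = ∫ y, g y ∂ν := by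
  rw [← integral_map hf.aemeasurable (hf.map_eq.symm ▸ hg), hf.map_eq]

namespace ProbabilityTheory

variable {X : Type*} [MeasurableSpace X] {μ : Measure X} {κ : Kernel X X}

lemma ae_integrable_of_comp_eq_self (hinv : κ ∘ₘ μ = μ) {u : X → ℝ} (hu : Integrable u μ) :
    ∀ᵐ x ∂μ, Integrable u (κ x) :=
  Measure.ae_integrable_of_integrable_comp (by rwa [hinv])

lemma measurePreserving_fst_compProd [SFinite μ] [IsMarkovKernel κ] :
    MeasurePreserving Prod.fst (μ ⊗ₘ κ) μ :=
  ⟨measurable_fst, Measure.fst_compProd μ κ⟩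

lemma measurePreserving_snd_compProd [SFinite μ] [IsSFiniteKernel κ] (hinv : κ ∘ₘ μ = μ) :
    MeasurePreserving Prod.snd (μ ⊗ₘ κ) μ :=
  ⟨measurable_snd, (Measure.snd_compProd μ κ).trans hinv⟩

variable [IsFiniteMeasure μ] [IsMarkovKernel κ]

lemma integral_compProd_snd_mul_fst (hinv : κ ∘ₘ μ = μ) {u w : X → ℝ}
    (hu : MemLp u 2 μ) (hw : MemLp w 2 μ) (hwu : w =ᵐ[μ] fun x ↦ ∫ y, u y ∂κ x) :
    ∫ p, u p.2 * w p.1 ∂(μ ⊗ₘ κ) = ∫ x, w x ^ 2 ∂μ := by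
  have hu₂ := hu.comp_measurePreserving (measurePreserving_snd_compProd hinv)
  have hw₁ := hw.comp_measurePreserving (measurePreserving_fst_compProd (κ := κ))
  rw [Measure.integral_compProd (f := fun p ↦ u p.2 * w p.1) (hu₂.integrable_mul hw₁)]
  refine integral_congr_ae ?_
  filter_upwards [ae_integrable_of_comp_eq_self hinv (hu.integrable one_le_two), hwu]
    with x hux hwx
  simp only [integral_mul_const, hwx, sq]

lemma integral_compProd_sq_snd_sub_fst (hinv : κ ∘ₘ μ = μ) {u w : X → ℝ}
    (hu : MemLp u 2 μ) (hw : MemLp w 2 μ) (hwu : w =ᵐ[μ] fun x ↦ ∫ y, u y ∂κ x) :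
    ∫ p, (u p.2 - w p.1) ^ 2 ∂(μ ⊗ₘ κ) = ∫ x, u x ^ 2 ∂μ - ∫ x, w x ^ 2 ∂μ := by
  have hsnd := measurePreserving_snd_compProd hinv
  have hfst := measurePreserving_fst_compProd (μ := μ) (κ := κ)
  have hu₂ := hu.comp_measurePreserving hsnd
  have hw₁ := hw.comp_measurePreserving hfst
  have hu_sq : Integrable (fun p : X × X ↦ u p.2 ^ 2) (μ ⊗ₘ κ) := hu₂.integrable_sq
  have hw_sq : Integrable (fun p : X × X ↦ w p.1 ^ 2) (μ ⊗ₘ κ) := hw₁.integrable_sq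
  have huw : Integrable (fun p : X × X ↦ u p.2 * w p.1) (μ ⊗ₘ κ) := hu₂.integrable_mul hw₁
  have hexpand (p : X × X) :
      (u p.2 - w p.1) ^ 2 = u p.2 ^ 2 - 2 * (u p.2 * w p.1) + w p.1 ^ 2 := by ring
  simp_rw [hexpand]
  rw [integral_add (f := fun p ↦ u p.2 ^ 2 - 2 * (u p.2 * w p.1))
      (hu_sq.sub (huw.const_mul 2)) hw_sq,
    integral_sub hu_sq (huw.const_mul 2), integral_const_mul,
    hsnd.integral_comp_of_aestronglyMeasurable (g := fun x ↦ u x ^ 2) (hu.1.pow 2),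
    hfst.integral_comp_of_aestronglyMeasurable (g := fun x ↦ w x ^ 2) (hw.1.pow 2),
    integral_compProd_snd_mul_fst hinv hu hw hwu]
  ring

end ProbabilityTheory

theorem stmt4_general {X : Type*} [MeasurableSpace X] (π : Measure X) [IsProbabilityMeasure π]
    (κ : Kernel X X) [IsMarkovKernel κ]
    (hinv : π.bind (fun x => κ x) = π)
    (g : X → ℝ)
    (ε δ : ℝ) (hε : 0 < ε) (hδ : 0 < δ)
    (hε' qε hδ' qδ : X → ℝ)
    (hε2 : MemLp hε' 2 π) (hδ2 : MemLp hδ' 2 π)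
    (hqε : ∀ x, qε x = ∫ y, hε' y ∂κ x) (hqδ : ∀ x, qδ x = ∫ y, hδ' y ∂κ x)
    (hresε : ∀ᵐ x ∂π, (1 + ε) * hε' x = qε x + g x)
    (hresδ : ∀ᵐ x ∂π, (1 + δ) * hδ' x = qδ x + g x) :
    ∫ p : X × X, ((hε' p.2 - qε p.1) - (hδ' p.2 - qδ p.1)) ^ 2 ∂(π.compProd κ)
      ≤ (ε + δ) * ((∫ x, (hε' x) ^ 2 ∂π) + ∫ x, (hδ' x) ^ 2 ∂π) := by
  set u : X → ℝ := fun x ↦ hε' x - hδ' x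
  set w : X → ℝ := fun x ↦ qε x - qδ x
  set v : X → ℝ := fun x ↦ (1 + ε) * hε' x - (1 + δ) * hδ' x
  have hu : MemLp u 2 π := hε2.sub hδ2
  have hv : MemLp v 2 π := (hε2.const_mul _).sub (hδ2.const_mul _)
  have hwv : w =ᵐ[π] v := by
    filter_upwards [hresε, hresδ] with x hxε hxδ
    simp only [w, v]
    linarith
  have hwu : w =ᵐ[π] fun x ↦ ∫ y, u y ∂κ x := by
    filter_upwards [ae_integrable_of_comp_eq_self hinv (hε2.integrable one_le_two),
      ae_integrable_of_comp_eq_self hinv (hδ2.integrable one_le_two)] with x hxε hxδ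
    simp only [w, u, hqε, hqδ, integral_sub hxε hxδ]
  calc ∫ p : X × X, ((hε' p.2 - qε p.1) - (hδ' p.2 - qδ p.1)) ^ 2 ∂(π.compProd κ)
      = ∫ p, (u p.2 - w p.1) ^ 2 ∂(π ⊗ₘ κ) := by
        congr 1
        ext p
        ring
    _ = ∫ x, u x ^ 2 ∂π - ∫ x, v x ^ 2 ∂π := by
        rw [integral_compProd_sq_snd_sub_fst hinv hu (hv.ae_eq hwv.symm) hwu]
        congr 1
        exact integral_congr_ae (hwv.fun_comp (· ^ 2))
    _ ≤ (ε + δ) * ((∫ x, (hε' x) ^ 2 ∂π) + ∫ x, (hδ' x) ^ 2 ∂π) :=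
        integral_sq_sub_sub_integral_sq_le hε.le hδ.le hε2 hδ2

/-- For all `0 < ε, δ < ∞`, `‖H_ε - H_δ‖₁² ≤ (ε+δ)(‖h_ε‖² + ‖h_δ‖²)`, where
`H_ε(x₀,x₁) = h_ε(x₁) - Qh_ε(x₀)`, `h_ε` solves `(1+ε)h_ε = Qh_ε + g`, and
`π₁ = π ⊗ κ`. -/
theorem stmt4 {X : Type*} [MeasurableSpace X] (π : Measure X) [IsProbabilityMeasure π]
    (κ : Kernel X X) [IsMarkovKernel κ]
    (hinv : π.bind (fun x => κ x) = π)
    (g : X → ℝ) (hgm : Measurable g) (hg2 : MemLp g 2 π) (hg0 : ∫ x, g x ∂π = 0)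
    (ε δ : ℝ) (hε : 0 < ε) (hδ : 0 < δ)
    (hε' qε hδ' qδ : X → ℝ)
    (hεm : Measurable hε') (hδm : Measurable hδ')
    (hε2 : MemLp hε' 2 π) (hδ2 : MemLp hδ' 2 π)
    (hqε : ∀ x, qε x = ∫ y, hε' y ∂κ x) (hqδ : ∀ x, qδ x = ∫ y, hδ' y ∂κ x)
    (hresε : ∀ᵐ x ∂π, (1 + ε) * hε' x = qε x + g x)
    (hresδ : ∀ᵐ x ∂π, (1 + δ) * hδ' x = qδ x + g x) :
    ∫ p : X × X, ((hε' p.2 - qε p.1) - (hδ' p.2 - qδ p.1)) ^ 2 ∂(π.compProd κ)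
      ≤ (ε + δ) * ((∫ x, (hε' x) ^ 2 ∂π) + ∫ x, (hδ' x) ^ 2 ∂π) :=
  stmt4_general π κ hinv g ε δ hε hδ hε' qε hδ' qδ hε2 hδ2 hqε hqδ hresε hresδ
end

section
/- Under stationarity, for each ε > 0 one has the decomposition S_n(g) = M_n(ε) + ε S_n(h_ε) + R_n(ε), where M_n(ε) = Σ_{i=1}^n H_ε(X_{i-1}, X_i) and R_n(ε) = Q h_ε(X₀) − Q h_ε(X_n), and M_n(ε) is a square-integrable martingale with respect to the natural filtration of the chain. -/
/-!
Writing `g = (1 + ε) hε - Qhε`, the sum `∑ g(X_{i+1})` splits into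
`∑ (hε(X_{i+1}) - Qhε(X_i))`, `ε ∑ hε(X_{i+1})` and the telescoping sum
`∑ (Qhε(X_i) - Qhε(X_{i+1}))`. The Markov property `E[hε(X_{n+1}) | ℱ_n] = Qhε(X_n)` says
exactly that the increments of the first sum are martingale differences, and they are square
integrable because `hε(X_n)` and `Qhε(X_n)` are.
-/

open MeasureTheory

theorem sum_range_eq_resolvent_decomposition {X : Type*} (x : ℕ → X) (g h q : X → ℝ) (ε : ℝ)
    (hres : ∀ y, (1 + ε) * h y = q y + g y) (n : ℕ) :
    ∑ i ∈ Finset.range n, g (x (i + 1))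
      = (∑ i ∈ Finset.range n, (h (x (i + 1)) - q (x i)))
        + ε * (∑ i ∈ Finset.range n, h (x (i + 1)))
        + (q (x 0) - q (x n)) := by
  induction n with
  | zero => simp
  | succ n ih =>
    rw [Finset.sum_range_succ, Finset.sum_range_succ, Finset.sum_range_succ, ih, mul_add]
    linarith [hres (x (n + 1))]

section Martingale

variable {Ω E : Type*} {m m0 : MeasurableSpace Ω} {μ : Measure Ω}
  [NormedAddCommGroup E] [NormedSpace ℝ E] [CompleteSpace E]

theorem condExp_sub_eq_zero_of_condExp_eq (hm : m ≤ m0) [SigmaFinite (μ.trim hm)]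
    {f g : Ω → E}
    (hf : Integrable f μ) (hg : Integrable g μ) (hgm : StronglyMeasurable[m] g)
    (hfg : μ[f | m] =ᵐ[μ] g) :
    μ[f - g | m] =ᵐ[μ] 0 := by
  filter_upwards [condExp_sub hf hg m, hfg] with ω hsub hf_eq
  rw [hsub, Pi.sub_apply, hf_eq, condExp_of_stronglyMeasurable hm hgm hg]
  exact sub_self _

theorem martingale_sum_range_of_condExp_eq_zero [IsFiniteMeasure μ] {ℱ : Filtration ℕ m0}
    {d : ℕ → Ω → E} (hd : ∀ i, StronglyMeasurable[ℱ (i + 1)] (d i))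
    (hint : ∀ i, Integrable (d i) μ) (hcond : ∀ i, μ[d i | ℱ i] =ᵐ[μ] 0) :
    Martingale (fun n ω => ∑ i ∈ Finset.range n, d i ω) ℱ μ := by
  refine martingale_of_condExp_sub_eq_zero_nat (fun n => ?_) (fun n => ?_) (fun n => ?_)
  · refine Finset.stronglyMeasurable_fun_sum _ fun i hi => (hd i).mono (ℱ.mono ?_)
    exact Finset.mem_range.mp hi
  · exact integrable_finsetSum _ fun i _ => hint i
  · have hinc : ((fun ω => ∑ i ∈ Finset.range (n + 1), d i ω)
        - fun ω => ∑ i ∈ Finset.range n, d i ω) = d n := by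
      funext ω
      simp [Finset.sum_range_succ]
    simpa only [hinc] using hcond n

end Martingale

theorem stmt6_general {X Ω : Type*} [MeasurableSpace X] {m0 : MeasurableSpace Ω}
    (μ : Measure Ω) [IsProbabilityMeasure μ]
    (Xc : ℕ → Ω → X)
    (ℱ : Filtration ℕ m0)
    (hadapt : ∀ n, @Measurable Ω X (ℱ n) _ (Xc n))
    (g hε qhε : X → ℝ) (hhm : Measurable hε) (hqm : Measurable qhε)
    (ε : ℝ)
    (hres : ∀ x, (1 + ε) * hε x = qhε x + g x)
    (hL2 : ∀ n, MemLp (fun ω => hε (Xc n ω)) 2 μ)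
    (hqL2 : ∀ n, MemLp (fun ω => qhε (Xc n ω)) 2 μ)
    (hmarkov : ∀ n : ℕ,
      μ[(fun ω => hε (Xc (n + 1) ω)) | ℱ n] =ᵐ[μ] fun ω => qhε (Xc n ω)) :
    (∀ n ω, ∑ i ∈ Finset.range n, g (Xc (i + 1) ω)
        = (∑ i ∈ Finset.range n, (hε (Xc (i + 1) ω) - qhε (Xc i ω)))
          + ε * (∑ i ∈ Finset.range n, hε (Xc (i + 1) ω))
          + (qhε (Xc 0 ω) - qhε (Xc n ω)))
    ∧ Martingale (fun n ω => ∑ i ∈ Finset.range n, (hε (Xc (i + 1) ω) - qhε (Xc i ω))) ℱ μ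
    ∧ ∀ n, MemLp (fun ω => ∑ i ∈ Finset.range n, (hε (Xc (i + 1) ω) - qhε (Xc i ω))) 2 μ := by
  have hdiffL2 (i : ℕ) : MemLp (fun ω => hε (Xc (i + 1) ω) - qhε (Xc i ω)) 2 μ :=
    (hL2 (i + 1)).sub (hqL2 i)
  have hqX (n : ℕ) : StronglyMeasurable[ℱ n] fun ω => qhε (Xc n ω) :=
    (hqm.comp (hadapt n)).stronglyMeasurable
  refine ⟨fun n ω => sum_range_eq_resolvent_decomposition (Xc · ω) g hε qhε ε hres n,
    martingale_sum_range_of_condExp_eq_zero (fun i => ?_)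
      (fun i => (hdiffL2 i).integrable one_le_two) (fun i => ?_),
    fun n => memLp_finsetSum _ fun i _ => hdiffL2 i⟩
  · exact (hhm.comp (hadapt (i + 1))).stronglyMeasurable.sub ((hqX i).mono (ℱ.mono i.le_succ))
  · exact condExp_sub_eq_zero_of_condExp_eq (ℱ.le i) ((hL2 (i + 1)).integrable one_le_two)
      ((hqL2 i).integrable one_le_two) (hqX i) (hmarkov i)

/-- For each `ε > 0`, `S_n(g) = M_n(ε) + ε S_n(h_ε) + R_n(ε)` with
`M_n(ε) = ∑_{i=1}^n H_ε(X_{i-1}, X_i)` a square-integrable martingale and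
`R_n(ε) = Qh_ε(X₀) - Qh_ε(X_n)`. -/
theorem stmt6 {X Ω : Type*} [MeasurableSpace X] {m0 : MeasurableSpace Ω}
    (μ : Measure Ω) [IsProbabilityMeasure μ]
    (Xc : ℕ → Ω → X) (hXm : ∀ n, Measurable (Xc n))
    (ℱ : Filtration ℕ m0)
    (hadapt : ∀ n, @Measurable Ω X (ℱ n) _ (Xc n))
    (g hε qhε : X → ℝ) (hgm : Measurable g) (hhm : Measurable hε) (hqm : Measurable qhε)
    (ε : ℝ) (hεpos : 0 < ε)
    (hres : ∀ x, (1 + ε) * hε x = qhε x + g x)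
    (hL2 : ∀ n, MemLp (fun ω => hε (Xc n ω)) 2 μ)
    (hqL2 : ∀ n, MemLp (fun ω => qhε (Xc n ω)) 2 μ)
    (hmarkov : ∀ n : ℕ,
      μ[(fun ω => hε (Xc (n + 1) ω)) | ℱ n] =ᵐ[μ] fun ω => qhε (Xc n ω)) :
    (∀ n ω, ∑ i ∈ Finset.range n, g (Xc (i + 1) ω)
        = (∑ i ∈ Finset.range n, (hε (Xc (i + 1) ω) - qhε (Xc i ω)))
          + ε * (∑ i ∈ Finset.range n, hε (Xc (i + 1) ω))
          + (qhε (Xc 0 ω) - qhε (Xc n ω)))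
    ∧ Martingale (fun n ω => ∑ i ∈ Finset.range n, (hε (Xc (i + 1) ω) - qhε (Xc i ω))) ℱ μ
    ∧ ∀ n, MemLp (fun ω => ∑ i ∈ Finset.range n, (hε (Xc (i + 1) ω) - qhε (Xc i ω))) 2 μ :=
  stmt6_general μ Xc ℱ hadapt g hε qhε hhm hqm ε hres hL2 hqL2 hmarkov
end

section
/- If ‖h_{δ_j}‖ = O(δ_j^{-α}) with δ_j = 2^{-j} and α < 1/2, then ‖H_{ε_n} − H‖₁ ≤ Σ_{j>k_n} ‖H_{δ_j} − H_{δ_{j-1}}‖₁ ≤ C Σ_{j > k_n} δ_j^{1/2−α} = O(n^{α−1/2}), where ε_n = 2^{-k_n} and 2^{k_n−1} ≤ n < 2^{k_n}. -/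
/-!
Applying the resolvent estimate to the consecutive scales `δ` and `2δ` bounds each dyadic
increment `‖H_{δ_{j+1}} - H_{δ_j}‖` by `K δ_{j+1}^{1/2-α}`, a geometric sequence because
`α < 1/2`. Since `H_{δ_j} → H`, the distance from `H_{δ_k}` to `H` is at most the tail of the
increments, and that tail is `O(δ_k^{1/2-α})`. Finally `δ_{k_n} ≤ 1/n`.
-/

open Filter

/-- The dyadic scale `δ_j = 2^{-j}`. -/
noncomputable def dyad (j : ℕ) : ℝ := (2 : ℝ) ^ (-(j : ℝ))

/-- `k_n` is the unique integer with `2^{k_n - 1} ≤ n < 2^{k_n}` (for `n ≥ 1`). -/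
def kn (n : ℕ) : ℕ := Nat.log 2 n + 1

open Topology

section Increments

variable {E : Type*} [SeminormedAddCommGroup E] {u : ℕ → E}

theorem summable_norm_sub_succ_of_le {g : ℕ → ℝ} (hg : Summable g)
    (h : ∀ m, ‖u (m + 1) - u m‖ ≤ g (m + 1)) : Summable fun m => ‖u (m + 1) - u m‖ :=
  .of_nonneg_of_le (fun _ => norm_nonneg _) h (hg.comp_injective (add_left_injective 1))

theorem tsum_norm_sub_succ_le {g : ℕ → ℝ} (hg : Summable g)
    (h : ∀ m, ‖u (m + 1) - u m‖ ≤ g (m + 1)) (k : ℕ) :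
    ∑' j, ‖u (k + 1 + j) - u (k + j)‖ ≤ ∑' j, g (k + 1 + j) := by
  have hshift (j : ℕ) : k + 1 + j = k + j + 1 := add_right_comm k 1 j
  refine Summable.tsum_le_tsum (fun j => ?_) ?_ (hg.comp_injective (add_right_injective _))
  · rw [hshift]; exact h (k + j)
  · exact ((summable_norm_sub_succ_of_le hg h).comp_injective (add_right_injective k)).congr
      fun j => by simp only [Function.comp_apply, hshift]

theorem norm_sub_le_tsum_norm_sub_succ {L : E} (hu : Tendsto u atTop (𝓝 L))
    (hs : Summable fun m => ‖u (m + 1) - u m‖) (k : ℕ) :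
    ‖u k - L‖ ≤ ∑' j, ‖u (k + 1 + j) - u (k + j)‖ := by
  have h := dist_le_tsum_of_dist_le_of_tendsto (fun m => ‖u (m + 1) - u m‖)
    (fun m => by rw [dist_comm, dist_eq_norm]) hs hu k
  simpa only [dist_eq_norm, add_right_comm] using h

end Increments

theorem norm_sub_two_mul_le_rpow {E : Type*} [SeminormedAddCommGroup E] {F : ℝ → E}
    {b : ℝ → ℝ} (hb0 : ∀ ε, 0 ≤ b ε)
    (hdiff : ∀ ε δ : ℝ, 0 < ε → 0 < δ → ‖F ε - F δ‖ ^ 2 ≤ (ε + δ) * (b ε ^ 2 + b δ ^ 2))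
    {C α δ : ℝ} (hδ : 0 < δ) (hC₁ : b δ ≤ C * δ ^ (-α)) (hC₂ : b (2 * δ) ≤ C * (2 * δ) ^ (-α)) :
    ‖F δ - F (2 * δ)‖ ≤ √(3 * C ^ 2 * (1 + (2 ^ (-α)) ^ 2)) * δ ^ (1 / 2 - α) := by
  have hsq₁ : b δ ^ 2 ≤ C ^ 2 * (δ ^ (-α)) ^ 2 := by
    rw [← mul_pow]; exact pow_le_pow_left₀ (hb0 _) hC₁ 2
  have hsq₂ : b (2 * δ) ^ 2 ≤ C ^ 2 * (2 ^ (-α)) ^ 2 * (δ ^ (-α)) ^ 2 := by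
    rw [← mul_pow, ← mul_pow, mul_assoc, ← Real.mul_rpow zero_le_two hδ.le]
    exact pow_le_pow_left₀ (hb0 _) hC₂ 2
  have hδ_sq : (δ ^ (1 / 2 - α)) ^ 2 = δ * (δ ^ (-α)) ^ 2 := by
    rw [sub_eq_add_neg, Real.rpow_add hδ, ← Real.sqrt_eq_rpow, mul_pow, Real.sq_sqrt hδ.le]
  have hM : 0 ≤ 3 * C ^ 2 * (1 + (2 ^ (-α)) ^ 2) := by positivity
  rw [← sq_le_sq₀ (norm_nonneg _) (by positivity), mul_pow, Real.sq_sqrt hM, hδ_sq]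
  calc ‖F δ - F (2 * δ)‖ ^ 2 ≤ (δ + 2 * δ) * (b δ ^ 2 + b (2 * δ) ^ 2) :=
        hdiff _ _ hδ (by positivity)
    _ ≤ (δ + 2 * δ) * (C ^ 2 * (δ ^ (-α)) ^ 2 + C ^ 2 * (2 ^ (-α)) ^ 2 * (δ ^ (-α)) ^ 2) := by
        gcongr
    _ = 3 * C ^ 2 * (1 + (2 ^ (-α)) ^ 2) * (δ * (δ ^ (-α)) ^ 2) := by ring

theorem dyad_pos (j : ℕ) : 0 < dyad j := Real.rpow_pos_of_pos two_pos _

theorem dyad_eq_inv_two_pow (j : ℕ) : dyad j = ((2 : ℝ) ^ j)⁻¹ := by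
  rw [dyad, Real.rpow_neg zero_le_two, Real.rpow_natCast]

theorem two_mul_dyad_succ (j : ℕ) : 2 * dyad (j + 1) = dyad j := by
  rw [dyad_eq_inv_two_pow, dyad_eq_inv_two_pow, pow_succ, mul_inv, mul_left_comm,
    mul_inv_cancel₀ two_ne_zero, mul_one]

theorem dyad_rpow_eq_pow (s : ℝ) (j : ℕ) : dyad j ^ s = ((2 : ℝ) ^ (-s)) ^ j := by
  rw [dyad, ← Real.rpow_mul zero_le_two, ← Real.rpow_natCast, ← Real.rpow_mul zero_le_two]
  ring_nf

theorem tendsto_dyad_nhdsGT_zero : Tendsto dyad atTop (𝓝[>] 0) := by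
  simp_rw [funext dyad_eq_inv_two_pow]
  exact tendsto_inv_atTop_nhdsGT_zero.comp (tendsto_pow_atTop_atTop_of_one_lt one_lt_two)

theorem hasSum_dyad_add_rpow {s : ℝ} (hs : 0 < s) (k : ℕ) :
    HasSum (fun j => dyad (k + j) ^ s) (dyad k ^ s * (1 - 2 ^ (-s))⁻¹) := by
  have hr : (2 : ℝ) ^ (-s) < 1 := Real.rpow_lt_one_of_one_lt_of_neg one_lt_two (neg_neg_of_pos hs)
  simp_rw [dyad_rpow_eq_pow s, pow_add]
  exact (hasSum_geometric_of_lt_one (by positivity) hr).mul_left _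

theorem summable_dyad_rpow {s : ℝ} (hs : 0 < s) : Summable fun j => dyad j ^ s := by
  simpa only [zero_add] using (hasSum_dyad_add_rpow hs 0).summable

theorem dyad_kn_le_inv {n : ℕ} (hn : 1 ≤ n) : dyad (kn n) ≤ (n : ℝ)⁻¹ := by
  have hlt : n < 2 ^ kn n := Nat.lt_pow_succ_log_self one_lt_two n
  rw [dyad_eq_inv_two_pow]
  exact inv_anti₀ (by exact_mod_cast hn) (by exact_mod_cast hlt.le)

theorem dyad_kn_succ_rpow_le {s : ℝ} (hs : 0 ≤ s) {n : ℕ} (hn : 1 ≤ n) :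
    dyad (kn n + 1) ^ s ≤ (n : ℝ) ^ (-s) := by
  have hle : dyad (kn n + 1) ≤ (n : ℝ)⁻¹ := by
    linarith [two_mul_dyad_succ (kn n), dyad_kn_le_inv hn, dyad_pos (kn n + 1)]
  rw [Real.rpow_neg n.cast_nonneg, ← Real.inv_rpow n.cast_nonneg]
  exact Real.rpow_le_rpow (dyad_pos _).le hle hs

/-- If `‖h_{δ_j}‖ = O(δ_j^{-α})` with `δ_j = 2^{-j}` and `α < 1/2`, then
`‖H_{ε_n} - H‖₁ ≤ ∑_{j>k_n} ‖H_{δ_j} - H_{δ_{j-1}}‖₁ ≤ C ∑_{j>k_n} δ_j^{1/2-α} = O(n^{α-1/2})`,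
where `ε_n = 2^{-k_n}`, `H_ε` satisfies `‖H_ε - H_δ‖₁² ≤ (ε+δ)(‖h_ε‖² + ‖h_δ‖²)` and
`H = lim_{ε↓0} H_ε`. -/
theorem stmt13 {E : Type*} [NormedAddCommGroup E]
    (Hf : ℝ → E) (H : E) (b : ℝ → ℝ) (hb0 : ∀ ε, 0 ≤ b ε)
    (α : ℝ) (hα : α < 1 / 2)
    (hb : ∃ C : ℝ, ∀ j : ℕ, b (dyad j) ≤ C * (dyad j) ^ (-α))
    (hdiff : ∀ ε δ : ℝ, 0 < ε → 0 < δ →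
      ‖Hf ε - Hf δ‖ ^ 2 ≤ (ε + δ) * ((b ε) ^ 2 + (b δ) ^ 2))
    (hlim : Tendsto Hf (nhdsWithin 0 (Set.Ioi 0)) (nhds H)) :
    (∀ n : ℕ, 1 ≤ n →
      ‖Hf (dyad (kn n)) - H‖ ≤ ∑' j : ℕ, ‖Hf (dyad (kn n + 1 + j)) - Hf (dyad (kn n + j))‖)
    ∧ (∃ C : ℝ, ∀ n : ℕ, 1 ≤ n →
        (∑' j : ℕ, ‖Hf (dyad (kn n + 1 + j)) - Hf (dyad (kn n + j))‖)
          ≤ C * ∑' j : ℕ, (dyad (kn n + 1 + j)) ^ ((1 : ℝ) / 2 - α))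
    ∧ (∃ C : ℝ, ∀ n : ℕ, 1 ≤ n →
        ‖Hf (dyad (kn n)) - H‖ ≤ C * (n : ℝ) ^ (α - 1 / 2)) := by
  obtain ⟨C, hC⟩ := hb
  set s : ℝ := 1 / 2 - α
  have hs : 0 < s := sub_pos.2 hα
  have hr : (2 : ℝ) ^ (-s) < 1 := Real.rpow_lt_one_of_one_lt_of_neg one_lt_two (neg_neg_of_pos hs)
  set K := √(3 * C ^ 2 * (1 + (2 ^ (-α)) ^ 2))
  have hstep (m : ℕ) : ‖Hf (dyad (m + 1)) - Hf (dyad m)‖ ≤ K * dyad (m + 1) ^ s := by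
    have h := two_mul_dyad_succ m
    have := norm_sub_two_mul_le_rpow hb0 hdiff (dyad_pos (m + 1)) (hC _) (h ▸ hC m)
    rwa [h] at this
  have hg : Summable fun m => K * dyad m ^ s := (summable_dyad_rpow hs).mul_left K
  have htail (k : ℕ) : ‖Hf (dyad k) - H‖ ≤ ∑' j, ‖Hf (dyad (k + 1 + j)) - Hf (dyad (k + j))‖ :=
    norm_sub_le_tsum_norm_sub_succ (hlim.comp tendsto_dyad_nhdsGT_zero)
      (summable_norm_sub_succ_of_le hg hstep) k
  have htail_le (k : ℕ) :
      ∑' j, ‖Hf (dyad (k + 1 + j)) - Hf (dyad (k + j))‖ ≤ K * ∑' j, dyad (k + 1 + j) ^ s := by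
    rw [← tsum_mul_left]
    exact tsum_norm_sub_succ_le (u := fun m => Hf (dyad m)) hg hstep k
  refine ⟨fun n _ => htail _, ⟨K, fun n _ => htail_le _⟩, ⟨K * (1 - 2 ^ (-s))⁻¹, fun n hn => ?_⟩⟩
  have hdyad : dyad (kn n + 1) ^ s ≤ (n : ℝ) ^ (α - 1 / 2) := by
    simpa only [s, neg_sub] using dyad_kn_succ_rpow_le hs.le hn
  calc ‖Hf (dyad (kn n)) - H‖ ≤ K * ∑' j, dyad (kn n + 1 + j) ^ s := (htail _).trans (htail_le _)
    _ = K * (1 - 2 ^ (-s))⁻¹ * dyad (kn n + 1) ^ s := by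
      rw [(hasSum_dyad_add_rpow hs _).tsum_eq]; ring
    _ ≤ K * (1 - 2 ^ (-s))⁻¹ * (n : ℝ) ^ (α - 1 / 2) := by gcongr
end

section
/- For g(x) = x^{-α} sin(1/x) on (0,1] with 0 < α < 1/2 (extended with mean-zero adjustment to L²₀(λ)), the integral ∫₀¹∫₀¹ [g(x)−g(y)]² |x−y|^{-1} log^δ(1/|x−y|) dx dy is finite for some δ > 0. -/
open MeasureTheory Set

namespace Stmt18Aux

lemma abs_rpow_intervalIntegrable {r : ℝ} (hr : -1 < r) (a b : ℝ) :
    IntervalIntegrable (fun u : ℝ => |u| ^ r) volume a b := by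
  have base : ∀ b : ℝ, 0 ≤ b → IntervalIntegrable (fun u : ℝ => |u| ^ r) volume 0 b := by
    intro b hb
    rw [intervalIntegrable_iff]
    have h := intervalIntegral.intervalIntegrable_rpow' hr (a := (0:ℝ)) (b := b)
    rw [intervalIntegrable_iff] at h
    refine h.congr_fun ?_ measurableSet_uIoc
    intro u hu
    rw [Set.uIoc_of_le hb] at hu
    simp only [abs_of_pos hu.1]
  have all0 : ∀ b : ℝ, IntervalIntegrable (fun u : ℝ => |u| ^ r) volume 0 b := by
    intro b
    rcases le_or_gt 0 b with hb | hb
    · exact base b hb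
    · have h := (base (-b) (by linarith))
      have h2 := (IntervalIntegrable.iff_comp_neg (f := fun u : ℝ => |u| ^ r) (a := 0) (b := -b) enorm_ne_top).mp h
      simpa using h2
  exact ((all0 a).symm.trans (all0 b))

lemma abs_rpow_integrableOn {r : ℝ} (hr : -1 < r) (a : ℝ) :
    IntegrableOn (fun t : ℝ => |t - a| ^ r) (Set.Ioc (0:ℝ) 1) volume := by
  have h := (abs_rpow_intervalIntegrable hr (-a) (1 - a)).comp_sub_right a
  have h2 : IntervalIntegrable (fun t : ℝ => |t - a| ^ r) volume 0 1 := by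
    simpa using h
  exact (intervalIntegrable_iff_integrableOn_Ioc_of_le zero_le_one).mp h2

lemma abs_rpow_integral_le {r : ℝ} (hr : -1 < r) {a : ℝ} (ha : a ∈ Set.Icc (0:ℝ) 1) :
    ∫ t in Set.Ioc (0:ℝ) 1, |t - a| ^ r ≤ ∫ u in Set.Ioc (-1:ℝ) 1, |u| ^ r := by
  have hI : IntegrableOn (fun u : ℝ => |u| ^ r) (Set.Ioc (-1:ℝ) 1) volume := by
    exact (intervalIntegrable_iff_integrableOn_Ioc_of_le (by norm_num)).mp
      (abs_rpow_intervalIntegrable hr (-1) 1)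
  have e1 : ∫ t in Set.Ioc (0:ℝ) 1, |t - a| ^ r
      = ∫ u in Set.Ioc (-a) (1 - a), |u| ^ r := by
    rw [← intervalIntegral.integral_of_le zero_le_one,
      ← intervalIntegral.integral_of_le (by linarith [ha.1, ha.2] : -a ≤ 1 - a)]
    have := intervalIntegral.integral_comp_sub_right (a := (0:ℝ)) (b := 1)
      (fun u : ℝ => |u| ^ r) a
    simpa using this
  rw [e1]
  refine setIntegral_mono_set hI ?_ ?_
  · filter_upwards with u
    positivity
  · exact HasSubset.Subset.eventuallyLE
      (Set.Ioc_subset_Ioc (by linarith [ha.2]) (by linarith [ha.1]))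

lemma prod_integrable {q r : ℝ} (hq : q < 1) (hr : -1 < r) :
    Integrable (fun p : ℝ × ℝ => p.1 ^ (-q) * |p.1 - p.2| ^ r)
      ((volume.restrict (Set.Ioc (0:ℝ) 1)).prod (volume.restrict (Set.Ioc (0:ℝ) 1))) := by
  set I := Set.Ioc (0:ℝ) 1 with hI
  set K := ∫ u in Set.Ioc (-1:ℝ) 1, |u| ^ r with hKdef
  have hmeas : Measurable (fun p : ℝ × ℝ => p.1 ^ (-q) * |p.1 - p.2| ^ r) := by
    fun_prop
  have h1f := hmeas.aestronglyMeasurable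
    (μ := ((volume.restrict I).prod (volume.restrict I)))
  rw [integrable_prod_iff h1f]
  constructor
  · filter_upwards [ae_restrict_mem measurableSet_Ioc] with x hx
    have h := (abs_rpow_integrableOn hr x).const_mul (x ^ (-q))
    refine h.congr ?_
    filter_upwards with y
    rw [abs_sub_comm]
  · refine Integrable.mono' (g := fun x : ℝ => x ^ (-q) * K) ?_ ?_ ?_
    · exact ((intervalIntegrable_iff_integrableOn_Ioc_of_le zero_le_one).mp
        (intervalIntegral.intervalIntegrable_rpow' (by linarith))).mul_const K
    · exact h1f.norm.integral_prod_right'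
    · filter_upwards [ae_restrict_mem measurableSet_Ioc] with x hx
      have hx0 : (0:ℝ) < x := hx.1
      have e : (fun y : ℝ => ‖x ^ (-q) * |x - y| ^ r‖)
          = fun y : ℝ => x ^ (-q) * |x - y| ^ r := by
        funext y
        rw [Real.norm_of_nonneg (by positivity)]
      rw [Real.norm_of_nonneg (integral_nonneg fun y => norm_nonneg _)]
      calc ∫ y in I, ‖x ^ (-q) * |x - y| ^ r‖
          = x ^ (-q) * ∫ y in I, |x - y| ^ r := by rw [e, integral_const_mul]
        _ ≤ x ^ (-q) * K := by
            refine mul_le_mul_of_nonneg_left ?_ (by positivity)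
            have e2 : ∫ y in I, |x - y| ^ r = ∫ y in I, |y - x| ^ r := by
              simp_rw [abs_sub_comm x]
            rw [e2, hKdef]
            exact abs_rpow_integral_le hr ⟨hx0.le, hx.2⟩

lemma prod_integrable' {q r : ℝ} (hq : q < 1) (hr : -1 < r) :
    Integrable (fun p : ℝ × ℝ => p.2 ^ (-q) * |p.1 - p.2| ^ r)
      ((volume.restrict (Set.Ioc (0:ℝ) 1)).prod (volume.restrict (Set.Ioc (0:ℝ) 1))) := by
  set I := Set.Ioc (0:ℝ) 1 with hI
  set K := ∫ u in Set.Ioc (-1:ℝ) 1, |u| ^ r with hKdef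
  have hmeas : Measurable (fun p : ℝ × ℝ => p.2 ^ (-q) * |p.1 - p.2| ^ r) := by
    fun_prop
  have h1f := hmeas.aestronglyMeasurable
    (μ := ((volume.restrict I).prod (volume.restrict I)))
  rw [integrable_prod_iff' h1f]
  constructor
  · filter_upwards [ae_restrict_mem measurableSet_Ioc] with y hy
    exact (abs_rpow_integrableOn hr y).const_mul (y ^ (-q))
  · refine Integrable.mono' (g := fun y : ℝ => y ^ (-q) * K) ?_ ?_ ?_
    · exact ((intervalIntegrable_iff_integrableOn_Ioc_of_le zero_le_one).mp
        (intervalIntegral.intervalIntegrable_rpow' (by linarith))).mul_const K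
    · exact h1f.norm.prod_swap.integral_prod_right'
    · filter_upwards [ae_restrict_mem measurableSet_Ioc] with y hy
      have hy0 : (0:ℝ) < y := hy.1
      have e : (fun x : ℝ => ‖y ^ (-q) * |x - y| ^ r‖)
          = fun x : ℝ => y ^ (-q) * |x - y| ^ r := by
        funext x
        rw [Real.norm_of_nonneg (by positivity)]
      rw [Real.norm_of_nonneg (integral_nonneg fun x => norm_nonneg _)]
      calc ∫ x in I, ‖y ^ (-q) * |x - y| ^ r‖
          = y ^ (-q) * ∫ x in I, |x - y| ^ r := by rw [e, integral_const_mul]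
        _ ≤ y ^ (-q) * K := by
            refine mul_le_mul_of_nonneg_left ?_ (by positivity)
            rw [hKdef]
            exact abs_rpow_integral_le hr ⟨hy0.le, hy.2⟩

lemma key {α θ q : ℝ} (hα0 : 0 < α) (hα1 : α ≤ 1) (hθ0 : 0 < θ) (hθ1 : θ < 1)
    (hqe : (-α - 2) * (2 * θ) + (-α) * (2 - 2 * θ) = -q) {x y : ℝ}
    (hx : x ∈ Set.Ioc (0:ℝ) 1) (hy : y ∈ Set.Ioc (0:ℝ) 1) (hxy : x ≤ y) :
    ((x ^ (-α) * Real.sin (1 / x)) - (y ^ (-α) * Real.sin (1 / y))) ^ 2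
      * |x - y|⁻¹ * Real.log (1 / |x - y|)
      ≤ 4 / θ * x ^ (-q) * |x - y| ^ (θ - 1) := by
  have hx0 : 0 < x := hx.1
  have hy0 : 0 < y := hy.1
  obtain rfl | hlt := eq_or_lt_of_le hxy
  · simp [sub_self, Real.zero_rpow (show θ - 1 ≠ 0 by intro h; linarith)]
  set t : ℝ := y - x with htdef
  have ht : 0 < t := by simp [htdef]; linarith
  have ht1 : t < 1 := by simp [htdef]; linarith [hy.2]
  have habs : |x - y| = t := by
    rw [abs_sub_comm, abs_of_pos ht]
  set g : ℝ → ℝ := fun u => u ^ (-α) * Real.sin (1 / u) with hgdef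
  set g' : ℝ → ℝ := fun u => (-α * u ^ (-α - 1)) * Real.sin (1 / u)
      + u ^ (-α) * (Real.cos (1 / u) * (-(u ^ 2)⁻¹)) with hg'def
  have hderiv : ∀ u ∈ Set.Icc x y, HasDerivWithinAt g (g' u) (Set.Icc x y) u := by
    intro u hu
    have hu0 : 0 < u := lt_of_lt_of_le hx0 hu.1
    have h1 : HasDerivAt (fun v : ℝ => v ^ (-α)) (-α * u ^ (-α - 1)) u :=
      Real.hasDerivAt_rpow_const (Or.inl hu0.ne')
    have hinv : HasDerivAt (fun v : ℝ => 1 / v) (-(u ^ 2)⁻¹) u := by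
      simpa [one_div] using hasDerivAt_inv hu0.ne'
    have h2 : HasDerivAt (fun v : ℝ => Real.sin (1 / v))
        (Real.cos (1 / u) * (-(u ^ 2)⁻¹)) u :=
      (Real.hasDerivAt_sin (1 / u)).comp u hinv
    exact (h1.mul h2).hasDerivWithinAt
  have hbound : ∀ u ∈ Set.Icc x y, ‖g' u‖ ≤ 2 * x ^ (-α - 2) := by
    intro u hu
    have hu0 : 0 < u := lt_of_lt_of_le hx0 hu.1
    have hu1 : u ≤ 1 := le_trans hu.2 hy.2
    have e1 : u ^ (-α) * (u ^ 2)⁻¹ = u ^ (-α - 2) := by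
      rw [← Real.rpow_natCast u 2, ← Real.rpow_neg hu0.le, ← Real.rpow_add hu0]
      ring_nf
    have hup : (0:ℝ) < u ^ (-α - 1) := Real.rpow_pos_of_pos hu0 _
    have hup2 : (0:ℝ) < u ^ (-α) := Real.rpow_pos_of_pos hu0 _
    have b1 : |(-α * u ^ (-α - 1)) * Real.sin (1 / u)| ≤ α * u ^ (-α - 1) := by
      rw [abs_mul, abs_mul, abs_neg, abs_of_pos hα0, abs_of_pos hup]
      calc α * u ^ (-α - 1) * |Real.sin (1 / u)| ≤ α * u ^ (-α - 1) * 1 := by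
            gcongr
            exact Real.abs_sin_le_one _
        _ = α * u ^ (-α - 1) := mul_one _
    have b2 : |u ^ (-α) * (Real.cos (1 / u) * (-(u ^ 2)⁻¹))| ≤ u ^ (-α) * (u ^ 2)⁻¹ := by
      rw [abs_mul, abs_mul, abs_neg, abs_of_pos hup2, abs_of_pos (by positivity : (0:ℝ) < (u ^ 2)⁻¹)]
      calc u ^ (-α) * (|Real.cos (1 / u)| * (u ^ 2)⁻¹)
          ≤ u ^ (-α) * (1 * (u ^ 2)⁻¹) := by
            gcongr
            exact Real.abs_cos_le_one _
        _ = u ^ (-α) * (u ^ 2)⁻¹ := by ring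
    have b3 : u ^ (-α - 1) ≤ u ^ (-α - 2) :=
      Real.rpow_le_rpow_of_exponent_ge hu0 hu1 (by linarith)
    have b4 : u ^ (-α - 2) ≤ x ^ (-α - 2) :=
      Real.rpow_le_rpow_of_nonpos hx0 hu.1 (by linarith)
    have hup3 : (0:ℝ) < u ^ (-α - 2) := Real.rpow_pos_of_pos hu0 _
    calc ‖g' u‖ ≤ |(-α * u ^ (-α - 1)) * Real.sin (1 / u)|
          + |u ^ (-α) * (Real.cos (1 / u) * (-(u ^ 2)⁻¹))| := abs_add_le _ _
      _ ≤ α * u ^ (-α - 1) + u ^ (-α) * (u ^ 2)⁻¹ := add_le_add b1 b2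
      _ = α * u ^ (-α - 1) + u ^ (-α - 2) := by rw [e1]
      _ ≤ α * u ^ (-α - 2) + u ^ (-α - 2) := by nlinarith
      _ ≤ 2 * u ^ (-α - 2) := by nlinarith
      _ ≤ 2 * x ^ (-α - 2) := by linarith
  have hmvt := (convex_Icc x y).norm_image_sub_le_of_norm_hasDerivWithin_le hderiv hbound
      (Set.left_mem_Icc.mpr hxy) (Set.right_mem_Icc.mpr hxy)
  have hD1 : |g x - g y| ≤ 2 * x ^ (-α - 2) * t := by
    rw [abs_sub_comm]
    simpa [Real.norm_eq_abs, ← htdef, abs_of_pos ht] using hmvt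
  have hgb : ∀ u ∈ Set.Ioc (0:ℝ) 1, |g u| ≤ u ^ (-α) := by
    intro u hu
    have hup : (0:ℝ) < u ^ (-α) := Real.rpow_pos_of_pos hu.1 _
    rw [hgdef]
    simp only
    rw [abs_mul, abs_of_pos hup]
    calc u ^ (-α) * |Real.sin (1 / u)| ≤ u ^ (-α) * 1 := by
          gcongr; exact Real.abs_sin_le_one _
      _ = u ^ (-α) := mul_one _
  have hD2 : |g x - g y| ≤ 2 * x ^ (-α) := by
    have h1 := hgb x hx
    have h2 := hgb y hy
    have h3 : y ^ (-α) ≤ x ^ (-α) :=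
      Real.rpow_le_rpow_of_nonpos hx0 hxy (by linarith)
    calc |g x - g y| ≤ |g x| + |g y| := abs_sub _ _
      _ ≤ 2 * x ^ (-α) := by linarith
  set D : ℝ := g x - g y with hDdef
  have hsq : D ^ 2 ≤ 4 * x ^ (-q) * t ^ (2 * θ) := by
    have e0 : D ^ 2 = |D| ^ ((2:ℝ)) := by
      rw [show ((2:ℝ)) = ((2:ℕ):ℝ) by norm_num, Real.rpow_natCast, sq_abs]
    have hA : |D| ^ (2 * θ) ≤ (2 * x ^ (-α - 2) * t) ^ (2 * θ) :=
      Real.rpow_le_rpow (abs_nonneg _) hD1 (by linarith)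
    have hB : |D| ^ (2 - 2 * θ) ≤ (2 * x ^ (-α)) ^ (2 - 2 * θ) :=
      Real.rpow_le_rpow (abs_nonneg _) hD2 (by linarith)
    have hxan : (0:ℝ) ≤ x ^ (-α - 2) := (Real.rpow_pos_of_pos hx0 _).le
    have hxan2 : (0:ℝ) ≤ x ^ (-α) := (Real.rpow_pos_of_pos hx0 _).le
    have hx4 : x ^ ((-α - 2) * (2 * θ)) * x ^ ((-α) * (2 - 2 * θ)) = x ^ (-q) := by
      rw [← Real.rpow_add hx0, hqe]
    have h24 : (2:ℝ) ^ (2 * θ) * (2:ℝ) ^ (2 - 2 * θ) = 4 := by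
      rw [← Real.rpow_add two_pos,
        show 2 * θ + (2 - 2 * θ) = (2:ℝ) by ring,
        show (2:ℝ) = ((2:ℕ):ℝ) by norm_num, Real.rpow_natCast]
      norm_num
    calc D ^ 2 = |D| ^ ((2:ℝ)) := e0
      _ = |D| ^ (2 * θ) * |D| ^ (2 - 2 * θ) := by
          rw [← Real.rpow_add' (abs_nonneg D) (by intro h; linarith)]
          norm_num
      _ ≤ (2 * x ^ (-α - 2) * t) ^ (2 * θ) * (2 * x ^ (-α)) ^ (2 - 2 * θ) :=
          mul_le_mul hA hB (Real.rpow_nonneg (abs_nonneg _) _)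
            (Real.rpow_nonneg (by positivity) _)
      _ = 4 * x ^ (-q) * t ^ (2 * θ) := by
          rw [Real.mul_rpow (by positivity) ht.le,
            Real.mul_rpow (by norm_num) hxan,
            Real.mul_rpow (by norm_num) hxan2,
            ← Real.rpow_mul hx0.le, ← Real.rpow_mul hx0.le,
            ← hx4, ← h24]
          ring
  have hlog : Real.log (1 / t) ≤ t ^ (-θ) / θ := by
    have h := Real.log_le_rpow_div (by positivity : (0:ℝ) ≤ 1 / t) hθ0
    have e : (1 / t) ^ θ = t ^ (-θ) := by
      rw [one_div, Real.inv_rpow ht.le, ← Real.rpow_neg ht.le]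
    rwa [e] at h
  have hlog0 : 0 ≤ Real.log (1 / t) :=
    Real.log_nonneg ((le_div_iff₀ ht).mpr (by linarith))
  rw [habs]
  have ht' : t⁻¹ = t ^ (-1:ℝ) := (Real.rpow_neg_one t).symm
  have e3 : t ^ (2 * θ) * t ^ (-1:ℝ) * t ^ (-θ) = t ^ (θ - 1) := by
    rw [← Real.rpow_add ht, ← Real.rpow_add ht]
    ring_nf
  have hsq0 : (0:ℝ) ≤ D ^ 2 := sq_nonneg _
  have hrhs0 : (0:ℝ) ≤ 4 * x ^ (-q) * t ^ (2 * θ) := by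
    have := (Real.rpow_pos_of_pos hx0 (-q)).le
    have := (Real.rpow_pos_of_pos ht (2 * θ)).le
    positivity
  calc D ^ 2 * t⁻¹ * Real.log (1 / t)
      ≤ (4 * x ^ (-q) * t ^ (2 * θ)) * t⁻¹ * (t ^ (-θ) / θ) := by
        have hstep1 : D ^ 2 * t⁻¹ ≤ (4 * x ^ (-q) * t ^ (2 * θ)) * t⁻¹ :=
          mul_le_mul_of_nonneg_right hsq (by positivity)
        have hstep2 : D ^ 2 * t⁻¹ * Real.log (1 / t)
            ≤ (4 * x ^ (-q) * t ^ (2 * θ)) * t⁻¹ * Real.log (1 / t) :=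
          mul_le_mul_of_nonneg_right hstep1 hlog0
        refine hstep2.trans (mul_le_mul_of_nonneg_left hlog ?_)
        positivity
    _ = 4 / θ * x ^ (-q) * t ^ (θ - 1) := by
        rw [ht', ← e3]
        field_simp

end Stmt18Aux

open Stmt18Aux

/-- For `g(x) = x^{-α} sin(1/x)` on `(0,1]` with `0 < α < 1/2`, the integral
`∫₀¹∫₀¹ (g(x)-g(y))² |x-y|⁻¹ log^δ(1/|x-y|) dx dy` is finite for some `δ > 0`
(adding a constant for mean zero does not change the integrand). -/
theorem stmt18 (α : ℝ) (hα0 : 0 < α) (hα2 : α < 1 / 2) :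
    ∃ δ : ℝ, 0 < δ ∧ IntegrableOn (fun p : ℝ × ℝ =>
        ((p.1 ^ (-α) * Real.sin (1 / p.1)) - (p.2 ^ (-α) * Real.sin (1 / p.2))) ^ 2
          * |p.1 - p.2|⁻¹ * (Real.log (1 / |p.1 - p.2|)) ^ δ)
      (Set.Ioc (0 : ℝ) 1 ×ˢ Set.Ioc (0 : ℝ) 1) volume := by
  refine ⟨1, one_pos, ?_⟩
  set θ : ℝ := (1 - 2 * α) / 8 with hθdef
  have hθ0 : 0 < θ := by rw [hθdef]; linarith
  have hθ1 : θ < 1 := by rw [hθdef]; linarith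
  set q : ℝ := α + 1/2 with hqdef
  have hq1 : q < 1 := by rw [hqdef]; linarith
  have hqe : (-α - 2) * (2 * θ) + (-α) * (2 - 2 * θ) = -q := by
    rw [hθdef, hqdef]; ring
  have hr : (-1:ℝ) < θ - 1 := by linarith
  set I := Set.Ioc (0:ℝ) 1 with hIdef
  have hμ : (volume : Measure (ℝ × ℝ)).restrict (I ×ˢ I)
      = (volume.restrict I).prod (volume.restrict I) := by
    rw [Measure.volume_eq_prod, Measure.prod_restrict]
  set G : ℝ × ℝ → ℝ := fun p =>
    4 / θ * (p.1 ^ (-q) * |p.1 - p.2| ^ (θ - 1) + p.2 ^ (-q) * |p.1 - p.2| ^ (θ - 1))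
    with hGdef
  have hG : Integrable G ((volume.restrict I).prod (volume.restrict I)) :=
    ((prod_integrable hq1 hr).add (prod_integrable' hq1 hr)).const_mul (4 / θ)
  have hmeas : Measurable (fun p : ℝ × ℝ =>
      ((p.1 ^ (-α) * Real.sin (1 / p.1)) - (p.2 ^ (-α) * Real.sin (1 / p.2))) ^ 2
        * |p.1 - p.2|⁻¹ * (Real.log (1 / |p.1 - p.2|)) ^ (1:ℝ)) := by
    have hd : Measurable fun p : ℝ × ℝ => |p.1 - p.2| :=
      (measurable_fst.sub measurable_snd).abs
    have hr1 : Measurable fun p : ℝ × ℝ => p.1 ^ (-α) := by fun_prop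
    have hr2 : Measurable fun p : ℝ × ℝ => p.2 ^ (-α) := by fun_prop
    have h1 : Measurable fun p : ℝ × ℝ => p.1 ^ (-α) * Real.sin (1 / p.1) :=
      hr1.mul (Real.measurable_sin.comp (measurable_const.div measurable_fst))
    have h2 : Measurable fun p : ℝ × ℝ => p.2 ^ (-α) * Real.sin (1 / p.2) :=
      hr2.mul (Real.measurable_sin.comp (measurable_const.div measurable_snd))
    have hlogm : Measurable fun p : ℝ × ℝ => Real.log (1 / |p.1 - p.2|) :=
      Real.measurable_log.comp (measurable_const.div hd)
    have hlogr : Measurable fun p : ℝ × ℝ => Real.log (1 / |p.1 - p.2|) ^ (1:ℝ) := by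
      fun_prop
    exact (((h1.sub h2).pow_const 2).mul hd.inv).mul hlogr
  have hae : ∀ᵐ p ∂((volume : Measure (ℝ × ℝ)).restrict (I ×ˢ I)),
      ‖((p.1 ^ (-α) * Real.sin (1 / p.1)) - (p.2 ^ (-α) * Real.sin (1 / p.2))) ^ 2
        * |p.1 - p.2|⁻¹ * (Real.log (1 / |p.1 - p.2|)) ^ (1:ℝ)‖ ≤ G p := by
    filter_upwards [ae_restrict_mem (measurableSet_Ioc.prod measurableSet_Ioc)] with p hp
    obtain ⟨hp1, hp2⟩ := hp
    rw [Real.rpow_one]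
    have habs1 : |p.1 - p.2| ≤ 1 := abs_sub_le_iff.mpr
      ⟨by linarith [hp1.2, hp2.1], by linarith [hp2.2, hp1.1]⟩
    have hlog0 : 0 ≤ Real.log (1 / |p.1 - p.2|) := by
      rcases eq_or_lt_of_le (abs_nonneg (p.1 - p.2)) with h0 | h0
      · rw [← h0]; simp
      · exact Real.log_nonneg ((le_div_iff₀ h0).mpr (by linarith))
    rw [Real.norm_of_nonneg (mul_nonneg (mul_nonneg (sq_nonneg _)
      (inv_nonneg.mpr (abs_nonneg _))) hlog0)]
    have hT : 0 ≤ |p.1 - p.2| ^ (θ - 1) := Real.rpow_nonneg (abs_nonneg _) _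
    rcases le_total p.1 p.2 with hle | hle
    · have hk := key hα0 (by linarith) hθ0 hθ1 hqe hp1 hp2 hle
      refine hk.trans ?_
      have h2 : 0 ≤ p.2 ^ (-q) * |p.1 - p.2| ^ (θ - 1) :=
        mul_nonneg (Real.rpow_nonneg hp2.1.le _) hT
      have h3 : 0 ≤ 4 / θ * (p.2 ^ (-q) * |p.1 - p.2| ^ (θ - 1)) :=
        mul_nonneg (by positivity) h2
      rw [hGdef]
      nlinarith [h3]
    · have hk := key hα0 (by linarith) hθ0 hθ1 hqe hp2 hp1 hle
      rw [abs_sub_comm p.2 p.1,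
        show ((p.2 ^ (-α) * Real.sin (1 / p.2)) - (p.1 ^ (-α) * Real.sin (1 / p.1))) ^ 2
          = ((p.1 ^ (-α) * Real.sin (1 / p.1)) - (p.2 ^ (-α) * Real.sin (1 / p.2))) ^ 2
          from by ring] at hk
      refine hk.trans ?_
      have h2 : 0 ≤ p.1 ^ (-q) * |p.1 - p.2| ^ (θ - 1) :=
        mul_nonneg (Real.rpow_nonneg hp1.1.le _) hT
      have h3 : 0 ≤ 4 / θ * (p.1 ^ (-q) * |p.1 - p.2| ^ (θ - 1)) :=
        mul_nonneg (by positivity) h2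
      rw [hGdef]
      nlinarith [h3]
  rw [hμ] at hae
  have hint := Integrable.mono' hG hmeas.aestronglyMeasurable hae
  rw [IntegrableOn, hμ]
  exact hint
end
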